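/- arXiv:1904.08435 — 4 statements merged into one kernel-verified Lean document; each statement's English description precedes it below -/
import Mathlib

section
/- For the qubit depolarising channel $D_t(\rho) = t\rho + (1-t)\mathrm{Tr}(\rho)\mathbb{I}/2$, the pair of depolarised Pauli measurements $\{D_t(M_{b|x})\}$ and $\{D_t(M_{b|z})\}$, where $M_{\pm|x}$ and $M_{\pm|z}$ are the spectral projectors of $\sigma_x$ and $\sigma_z$, is compatible whenever $t \leq 1/\sqrt{2}$. -/
open Matrix ComplexOrder

noncomputable section

def σx : Matrix (Fin 2) (Fin 2) ℂ := !![0, 1; 1, 0]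
def σz : Matrix (Fin 2) (Fin 2) ℂ := !![1, 0; 0, -1]

/-- Depolarising channel acting on a qubit effect. -/
def Dep (t : ℝ) (M : Matrix (Fin 2) (Fin 2) ℂ) : Matrix (Fin 2) (Fin 2) ℂ :=
  (t : ℂ) • M + ((1 - t : ℝ) : ℂ) • (M.trace • ((1/2 : ℂ) • (1 : Matrix (Fin 2) (Fin 2) ℂ)))

/-!
The joint measurement is `G a b = (1 + t εₐ σx + t ε_b σz) / 4` with `ε = ±1`. Summing out
either outcome leaves `(1 ± t σ) / 2`, which is exactly the depolarised effect, and `G a b` is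
positive semidefinite because its Bloch vector `(εₐ t, ε_b t)` has length `√2 t ≤ 1`.
-/

theorem Matrix.posSemidef_fin_two {a d : ℝ} {c : ℂ} (ha : 0 ≤ a) (hd : 0 ≤ d)
    (hc : Complex.normSq c ≤ a * d) : (!![(a : ℂ), c; star c, d]).PosSemidef := by
  rw [posSemidef_iff_dotProduct_mulVec]
  refine ⟨?_, fun x => ?_⟩
  · ext i j
    fin_cases i <;> fin_cases j <;> simp
  set w := c * star (x 0) * x 1
  have hform : star x ⬝ᵥ !![(a : ℂ), c; star c, d] *ᵥ x =
      ((a * Complex.normSq (x 0) + d * Complex.normSq (x 1) + 2 * w.re : ℝ) : ℂ) := by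
    apply Complex.ext <;>
      simp [w, dotProduct, mulVec, Fin.sum_univ_two, Complex.normSq_apply] <;> ring
  rw [hform, Complex.zero_le_real]
  have hu := Complex.normSq_nonneg (x 0)
  have hv := Complex.normSq_nonneg (x 1)
  have hw : w.re * w.re ≤ a * Complex.normSq (x 0) * (d * Complex.normSq (x 1)) :=
    calc w.re * w.re ≤ Complex.normSq w := Complex.re_sq_le_normSq w
      _ = Complex.normSq c * Complex.normSq (x 0) * Complex.normSq (x 1) := by
        simp [w, Complex.normSq_mul]
      _ ≤ a * d * Complex.normSq (x 0) * Complex.normSq (x 1) := by gcongr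
      _ = _ := by ring
  -- AM-GM: `(a|u|² + d|v|²)² ≥ 4 a|u|² d|v|² ≥ (2 Re w)²`
  have : |2 * w.re| ≤ a * Complex.normSq (x 0) + d * Complex.normSq (x 1) :=
    abs_le_of_sq_le_sq
      (by nlinarith [sq_nonneg (a * Complex.normSq (x 0) - d * Complex.normSq (x 1))])
      (by positivity)
  linarith [neg_abs_le (2 * w.re)]

lemma trace_σx : σx.trace = 0 := by simp [σx, trace_fin_two]

lemma trace_σz : σz.trace = 0 := by simp [σz, trace_fin_two]

lemma Dep_half_smul_one_add (t : ℝ) {σ : Matrix (Fin 2) (Fin 2) ℂ} (hσ : σ.trace = 0) :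
    Dep t ((1/2 : ℂ) • (1 + σ)) = (1/2 : ℂ) • (1 + (t : ℂ) • σ) := by
  simp only [Dep, trace_smul, trace_add, hσ, trace_one, Fintype.card_fin]
  push_cast
  module

lemma posSemidef_one_add_smul_σx_add_smul_σz {x z : ℝ} (h : x ^ 2 + z ^ 2 ≤ 1) :
    (1 + (x : ℂ) • σx + (z : ℂ) • σz).PosSemidef := by
  have hmat : 1 + (x : ℂ) • σx + (z : ℂ) • σz =
      !![((1 + z : ℝ) : ℂ), (x : ℂ); star (x : ℂ), ((1 - z : ℝ) : ℂ)] := by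
    ext i j
    fin_cases i <;> fin_cases j <;> simp [σx, σz, sub_eq_add_neg]
  rw [hmat]
  exact posSemidef_fin_two (by nlinarith) (by nlinarith) (by simp; nlinarith)

theorem depolarised_xz_compatible (t : ℝ) (h0 : 0 ≤ t) (ht : t ≤ 1 / Real.sqrt 2) :
    ∃ G : Fin 2 → Fin 2 → Matrix (Fin 2) (Fin 2) ℂ,
      (∀ a b, (G a b).PosSemidef) ∧
      (∑ a, ∑ b, G a b = 1) ∧
      (∑ b, G 0 b = Dep t ((1/2 : ℂ) • (1 + σx))) ∧
      (∑ a, G a 0 = Dep t ((1/2 : ℂ) • (1 + σz))) := by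
  have ht2 : 2 * t ^ 2 ≤ 1 := by
    have := pow_le_pow_left₀ h0 ht 2
    rw [div_pow, Real.sq_sqrt zero_le_two] at this
    linarith
  let ε : Fin 2 → ℝ := ![1, -1]
  refine ⟨fun a b => (1/4 : ℂ) • (1 + ((ε a * t : ℝ) : ℂ) • σx + ((ε b * t : ℝ) : ℂ) • σz),
    fun a b => ?_, ?_, ?_, ?_⟩
  · refine (posSemidef_one_add_smul_σx_add_smul_σz ?_).smul (by positivity)
    fin_cases a <;> fin_cases b <;> simp [ε] <;> linarith
  all_goals
    simp only [Dep_half_smul_one_add t trace_σx, Dep_half_smul_one_add t trace_σz,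
      Fin.sum_univ_two, ε, cons_val_zero, cons_val_one, cons_val_fin_one]
    push_cast
    module
end
end

section
/- The three depolarised Pauli measurements $\{D_t(M_{\pm|x})\}, \{D_t(M_{\pm|y})\}, \{D_t(M_{\pm|z})\}$ on a qubit are compatible when $t \leq 1/\sqrt{3}$. -/
/-!
Take the eight-outcome POVM `G a b c = (1 + t (±σx ± σy ± σz)) / 8`, with the signs fixed by
`a b c`. Summing out two of the three signs cancels their Pauli terms, leaving the depolarised
projector `(1 ± t σ) / 2` on the remaining axis. Each `G a b c` has Bloch vector of length
`√3 t ≤ 1`, hence is positive semidefinite.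
-/

open Matrix ComplexOrder

noncomputable section

def σy : Matrix (Fin 2) (Fin 2) ℂ := !![0, -Complex.I; Complex.I, 0]
lemma posSemidef_of_normSq_le {p q : ℝ} {w : ℂ} (hp : 0 ≤ p) (hq : 0 ≤ q)
    (h : Complex.normSq w ≤ p * q) : !![(p : ℂ), w; star w, (q : ℂ)].PosSemidef := by
  rcases hp.eq_or_lt with rfl | hp
  · obtain rfl : w = 0 := Complex.normSq_eq_zero.mp (by linarith [Complex.normSq_nonneg w])
    convert PosSemidef.diagonal (d := ![(0 : ℂ), (q : ℂ)]) ?_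
    · ext i j; fin_cases i <;> fin_cases j <;> simp
    · intro i; fin_cases i <;> simp [hq]
  · -- `p • M` is `v vᴴ` with `v = (p, w̄)`, plus the Schur complement `p q - |w|²` in the corner.
    have hdecomp : !![(p : ℂ), w; star w, (q : ℂ)] = ((p⁻¹ : ℝ) : ℂ) •
        (vecMulVec ![(p : ℂ), star w] (star ![(p : ℂ), star w]) +
          diagonal ![0, ((p * q - Complex.normSq w : ℝ) : ℂ)]) := by
      ext i j; fin_cases i <;> fin_cases j <;> simp [vecMulVec] <;> field_simp
      rw [Complex.normSq_eq_conj_mul_self]; ring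
    rw [hdecomp]
    refine .smul (.add (posSemidef_vecMulVec_self_star _) (.diagonal ?_)) ?_
    · intro i; fin_cases i <;> simp; exact_mod_cast h
    · exact_mod_cast (inv_pos.mpr hp).le

def blochMatrix (a x y z : ℝ) : Matrix (Fin 2) (Fin 2) ℂ :=
  (a : ℂ) • 1 + (x : ℂ) • σx + (y : ℂ) • σy + (z : ℂ) • σz

lemma blochMatrix_eq (a x y z : ℝ) :
    blochMatrix a x y z =
      !![((a + z : ℝ) : ℂ), x - y * Complex.I; x + y * Complex.I, ((a - z : ℝ) : ℂ)] := by
  ext i j; fin_cases i <;> fin_cases j <;> simp [blochMatrix, σx, σy, σz] <;> ring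

lemma blochMatrix_posSemidef {a x y z : ℝ} (h : x ^ 2 + y ^ 2 + z ^ 2 ≤ a ^ 2) (ha : 0 ≤ a) :
    (blochMatrix a x y z).PosSemidef := by
  obtain ⟨hz, hz'⟩ := abs_le.mp (abs_le_of_sq_le_sq (a := z) (by nlinarith) ha)
  have hw : star ((x : ℂ) - y * Complex.I) = x + y * Complex.I := by simp
  rw [blochMatrix_eq, ← hw]
  refine posSemidef_of_normSq_le (by linarith) (by linarith) ?_
  simp [Complex.normSq_apply]
  nlinarith

lemma trace_σy : σy.trace = 0 := by simp [σy, trace]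

lemma dep_half_one_add {σ : Matrix (Fin 2) (Fin 2) ℂ} (hσ : σ.trace = 0) (t : ℝ) :
    Dep t ((1 / 2 : ℂ) • (1 + σ)) = (1 / 2 : ℂ) • (1 + (t : ℂ) • σ) := by
  simp [Dep, trace_add, hσ]
  module

theorem depolarised_xyz_compatible (t : ℝ) (h0 : 0 ≤ t) (ht : t ≤ 1 / Real.sqrt 3) :
    ∃ G : Fin 2 → Fin 2 → Fin 2 → Matrix (Fin 2) (Fin 2) ℂ,
      (∀ a b c, (G a b c).PosSemidef) ∧
      (∑ a, ∑ b, ∑ c, G a b c = 1) ∧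
      (∑ b, ∑ c, G 0 b c = Dep t ((1/2 : ℂ) • (1 + σx))) ∧
      (∑ a, ∑ c, G a 0 c = Dep t ((1/2 : ℂ) • (1 + σy))) ∧
      (∑ a, ∑ b, G a b 0 = Dep t ((1/2 : ℂ) • (1 + σz))) := by
  have ht_sq : 3 * t ^ 2 ≤ 1 := by
    have := pow_le_pow_left₀ h0 ht 2
    rwa [div_pow, Real.sq_sqrt (by norm_num), le_div_iff₀ (by norm_num), one_pow, mul_comm] at this
  let s : Fin 2 → ℝ := ![1, -1]
  have hs_sq : ∀ i, s i ^ 2 = 1 := by intro i; fin_cases i <;> simp [s]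
  refine ⟨fun a b c => blochMatrix (1 / 8) (t * s a / 8) (t * s b / 8) (t * s c / 8),
    fun a b c => blochMatrix_posSemidef (by nlinarith [hs_sq a, hs_sq b, hs_sq c]) (by norm_num),
    ?_, ?_, ?_, ?_⟩
  all_goals
    simp only [dep_half_one_add trace_σx, dep_half_one_add trace_σy, dep_half_one_add trace_σz,
      blochMatrix, Fin.sum_univ_two, s, cons_val_zero, cons_val_one, cons_val_fin_one]
    push_cast
    module
end
end

section
/- If a behaviour violates a quantum communication witness, it is not CC-realisable: given real coefficients $\mu_{bxy}$ and an operator $B$ on $\mathcal{H}$ satisfying $\sum_{b,x,y} \mu_{bxy}\, \rho_x\, \delta_{\mathbf{a}(y),b} \geq B$ (in the positive semidefinite order) for every function $\mathbf{a}: [m] \to [o]$, every CC-realisable behaviour $P$ satisfies $\sum_{b,x,y} \mu_{bxy} P(b|\rho_x,y) \geq \mathrm{Tr}(B)$. -/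
open Matrix ComplexOrder

noncomputable section

def IsPOVM' {d : ℕ} {ι : Type*} [Fintype ι] (N : ι → Matrix (Fin d) (Fin d) ℂ) : Prop :=
  (∀ a, (N a).PosSemidef) ∧ ∑ a, N a = 1

/-!
Pairing the witness inequality `W g - B ≥ 0` with the POVM element `N g ≥ 0` gives
`tr ((W g - B) N g) ≥ 0`, since the trace of a product of positive semidefinite matrices is
nonnegative. Summing over `g` and using `∑ g, N g = 1` yields `tr B ≤ ∑ g, tr (W g N g)`, and the
right-hand side is exactly the witness value `∑ μ P` of the behaviour realised by `N`.
-/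

open scoped MatrixOrder in
theorem Matrix.PosSemidef.trace_mul_nonneg {𝕜 n : Type*} [RCLike 𝕜] [Fintype n]
    {A C : Matrix n n 𝕜} (hA : A.PosSemidef) (hC : C.PosSemidef) : 0 ≤ (A * C).trace := by
  classical
  have hsqrt : A = (CFC.sqrt A)ᴴ * CFC.sqrt A := by
    rw [← star_eq_conjTranspose, (CFC.sqrt_nonneg A).isSelfAdjoint.star_eq,
      CFC.sqrt_mul_sqrt_self A hA.nonneg]
  rw [hsqrt, Matrix.mul_assoc, trace_mul_comm]
  exact (hC.mul_mul_conjTranspose_same _).trace_nonneg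

theorem IsPOVM'.trace_le_sum_trace_mul {d : ℕ} {ι : Type*} [Fintype ι]
    {N : ι → Matrix (Fin d) (Fin d) ℂ} (hN : IsPOVM' N) {B : Matrix (Fin d) (Fin d) ℂ}
    {W : ι → Matrix (Fin d) (Fin d) ℂ} (hW : ∀ i, (W i - B).PosSemidef) :
    B.trace ≤ ∑ i, (W i * N i).trace :=
  calc B.trace = ∑ i, (B * N i).trace := by
        rw [← trace_sum, ← Matrix.mul_sum, hN.2, Matrix.mul_one]
    _ ≤ ∑ i, (W i * N i).trace := Finset.sum_le_sum fun i _ => by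
        simpa only [Matrix.sub_mul, trace_sub, sub_nonneg] using
          (hW i).trace_mul_nonneg (hN.1 i)

theorem sum_trace_witness_mul_eq {d X m o : ℕ} (ρ : Fin X → Matrix (Fin d) (Fin d) ℂ)
    (μ P : Fin o → Fin X → Fin m → ℝ) (N : (Fin m → Fin o) → Matrix (Fin d) (Fin d) ℂ)
    (hP : ∀ b x y, (P b x y : ℂ) =
      ∑ g : Fin m → Fin o, (ρ x * N g).trace * (if g y = b then 1 else 0)) :
    ∑ g : Fin m → Fin o,
        ((∑ b, ∑ x, ∑ y, (if g y = b then (μ b x y : ℂ) else 0) • ρ x) * N g).trace =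
      ((∑ b, ∑ x, ∑ y, μ b x y * P b x y : ℝ) : ℂ) := by
  simp only [Matrix.sum_mul, Matrix.smul_mul, trace_sum, trace_smul, smul_eq_mul,
    Complex.ofReal_sum, Complex.ofReal_mul, hP, Finset.mul_sum]
  rw [Finset.sum_comm]
  refine Finset.sum_congr rfl fun b _ => ?_
  rw [Finset.sum_comm]
  refine Finset.sum_congr rfl fun x _ => ?_
  rw [Finset.sum_comm]
  refine Finset.sum_congr rfl fun y _ => Finset.sum_congr rfl fun g _ => ?_
  split_ifs <;> ring

theorem qc_witness_valid_on_cc_general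
    {d X m o : ℕ}
    (ρ : Fin X → Matrix (Fin d) (Fin d) ℂ)
    (μ : Fin o → Fin X → Fin m → ℝ)
    (B : Matrix (Fin d) (Fin d) ℂ)
    (hwit : ∀ g : Fin m → Fin o,
      ((∑ b, ∑ x, ∑ y, (if g y = b then (μ b x y : ℂ) else 0) • ρ x) - B).PosSemidef)
    (P : Fin o → Fin X → Fin m → ℝ)
    (hCC : ∃ N : (Fin m → Fin o) → Matrix (Fin d) (Fin d) ℂ, IsPOVM' N ∧
      ∀ b x y, (P b x y : ℂ) =
        ∑ g : Fin m → Fin o, (ρ x * N g).trace * (if g y = b then 1 else 0)) :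
    B.trace.re ≤ ∑ b, ∑ x, ∑ y, μ b x y * P b x y := by
  obtain ⟨N, hN, hP⟩ := hCC
  have h := hN.trace_le_sum_trace_mul hwit
  rw [sum_trace_witness_mul_eq ρ μ P N hP] at h
  simpa only [Complex.ofReal_re] using (Complex.le_def.mp h).1

theorem qc_witness_valid_on_cc
    {d X m o : ℕ}
    (ρ : Fin X → Matrix (Fin d) (Fin d) ℂ)
    (hρ : ∀ x, (ρ x).PosSemidef ∧ (ρ x).trace = 1)
    (μ : Fin o → Fin X → Fin m → ℝ)
    (B : Matrix (Fin d) (Fin d) ℂ)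
    (hwit : ∀ g : Fin m → Fin o,
      ((∑ b, ∑ x, ∑ y, (if g y = b then (μ b x y : ℂ) else 0) • ρ x) - B).PosSemidef)
    (P : Fin o → Fin X → Fin m → ℝ)
    (hCC : ∃ N : (Fin m → Fin o) → Matrix (Fin d) (Fin d) ℂ, IsPOVM' N ∧
      ∀ b x y, (P b x y : ℂ) =
        ∑ g : Fin m → Fin o, (ρ x * N g).trace * (if g y = b then 1 else 0)) :
    B.trace.re ≤ ∑ b, ∑ x, ∑ y, μ b x y * P b x y :=
  qc_witness_valid_on_cc_general ρ μ B hwit P hCC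
end
end

section
/- The qubit depolarising channel $D_t(\rho) = t\rho + (1-t)\mathrm{Tr}(\rho)\mathbb{I}/2$ is a measure-and-prepare (entanglement-breaking) channel when $t \leq 1/3$: there exist a POVM $\{N_a\}$ and states $\{\sigma_a\}$ on $\mathbb{C}^2$ with $D_t(\rho) = \sum_a \mathrm{Tr}(\rho N_a) \sigma_a$ for all density operators $\rho$. -/
/-! The six eigenprojectors `P a` of the three Pauli matrices form a quantum 2-design:
`∑ a, P a = 3` and `∑ a, Tr(ρ P a) P a = ρ + Tr(ρ) 1`. Measuring the POVM `{P a / 3}` and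
preparing `3t P a + (1 - 3t)/2 · 1` therefore reproduces `t ρ + (1 - t) Tr(ρ) 1/2`, and these
preparations are states when `0 ≤ t ≤ 1/3`. -/

open Matrix ComplexOrder

noncomputable section

def pauliEigenprojector : Fin 6 → Matrix (Fin 2) (Fin 2) ℂ
  | 0 => !![1/2, 1/2; 1/2, 1/2]
  | 1 => !![1/2, -1/2; -1/2, 1/2]
  | 2 => !![1/2, -Complex.I/2; Complex.I/2, 1/2]
  | 3 => !![1/2, Complex.I/2; -Complex.I/2, 1/2]
  | 4 => !![1, 0; 0, 0]
  | 5 => !![0, 0; 0, 1]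

lemma pauliEigenprojector_posSemidef (a : Fin 6) : (pauliEigenprojector a).PosSemidef := by
  obtain ⟨c, v, hc, hP⟩ : ∃ (c : ℝ) (v : Fin 2 → ℂ), 0 ≤ c ∧
      pauliEigenprojector a = c • vecMulVec v (star v) := by
    fin_cases a <;>
      [refine ⟨1/2, ![1, 1], by norm_num, ?_⟩; refine ⟨1/2, ![1, -1], by norm_num, ?_⟩;
        refine ⟨1/2, ![1, Complex.I], by norm_num, ?_⟩;
        refine ⟨1/2, ![1, -Complex.I], by norm_num, ?_⟩;
        refine ⟨1, ![1, 0], zero_le_one, ?_⟩; refine ⟨1, ![0, 1], zero_le_one, ?_⟩] <;>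
      ext i j <;> fin_cases i <;> fin_cases j <;>
      simp only [Matrix.smul_apply, vecMulVec_apply] <;> simp [pauliEigenprojector] <;> ring
  exact hP ▸ (posSemidef_vecMulVec_self_star v).smul hc

lemma trace_pauliEigenprojector (a : Fin 6) : (pauliEigenprojector a).trace = 1 := by
  fin_cases a <;> simp [pauliEigenprojector, trace_fin_two] <;> norm_num

lemma sum_pauliEigenprojector : ∑ a, pauliEigenprojector a = (3 : ℂ) • 1 := by
  ext i j
  fin_cases i <;> fin_cases j <;> simp [Fin.sum_univ_six, pauliEigenprojector] <;> ring

lemma sum_trace_mul_pauliEigenprojector_smul (ρ : Matrix (Fin 2) (Fin 2) ℂ) :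
    ∑ a, (ρ * pauliEigenprojector a).trace • pauliEigenprojector a = ρ + ρ.trace • 1 := by
  ext i j
  fin_cases i <;> fin_cases j <;>
    simp [Fin.sum_univ_six, pauliEigenprojector, trace_fin_two, mul_apply] <;>
    ring_nf <;> simp only [Complex.I_sq] <;> ring

lemma sum_trace_mul_pauliEigenprojector (ρ : Matrix (Fin 2) (Fin 2) ℂ) :
    ∑ a, (ρ * pauliEigenprojector a).trace = 3 * ρ.trace := by
  rw [← trace_sum, ← Matrix.mul_sum, sum_pauliEigenprojector, mul_smul_comm, mul_one,
    trace_smul, smul_eq_mul]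

def pauliPreparedState (t : ℝ) (a : Fin 6) : Matrix (Fin 2) (Fin 2) ℂ :=
  ((3 * t : ℝ) : ℂ) • pauliEigenprojector a + (((1 - 3 * t) / 2 : ℝ) : ℂ) • 1

lemma pauliPreparedState_posSemidef {t : ℝ} (h0 : 0 ≤ t) (ht : t ≤ 1/3) (a : Fin 6) :
    (pauliPreparedState t a).PosSemidef :=
  ((pauliEigenprojector_posSemidef a).smul (Complex.zero_le_real.2 (by linarith))).add
    (PosSemidef.one.smul (Complex.zero_le_real.2 (by linarith)))

lemma trace_pauliPreparedState (t : ℝ) (a : Fin 6) : (pauliPreparedState t a).trace = 1 := by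
  simp only [pauliPreparedState, trace_add, trace_smul, trace_pauliEigenprojector, trace_one,
    Fintype.card_fin]
  push_cast
  ring

lemma sum_trace_mul_smul_pauliPreparedState (t : ℝ) (ρ : Matrix (Fin 2) (Fin 2) ℂ) :
    ∑ a, (ρ * ((1/3 : ℂ) • pauliEigenprojector a)).trace • pauliPreparedState t a =
      (t : ℂ) • ρ + ((1 - t) / 2 * ρ.trace) • 1 := by
  have hterm (a : Fin 6) :
      (ρ * ((1/3 : ℂ) • pauliEigenprojector a)).trace • pauliPreparedState t a =
        (t : ℂ) • ((ρ * pauliEigenprojector a).trace • pauliEigenprojector a) +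
          ((1 - 3 * t) / 6 * (ρ * pauliEigenprojector a).trace) • 1 := by
    rw [pauliPreparedState, mul_smul_comm, trace_smul, smul_add, smul_smul, smul_smul, smul_smul,
      smul_eq_mul]
    push_cast
    congr 2 <;> ring
  rw [Finset.sum_congr rfl fun a _ => hterm a, Finset.sum_add_distrib, ← Finset.smul_sum,
    ← Finset.sum_smul, ← Finset.mul_sum, sum_trace_mul_pauliEigenprojector_smul,
    sum_trace_mul_pauliEigenprojector]
  module

theorem depolarising_measure_and_prepare (t : ℝ) (h0 : 0 ≤ t) (ht : t ≤ 1/3) :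
    ∃ (n : ℕ) (N : Fin n → Matrix (Fin 2) (Fin 2) ℂ)
      (σ : Fin n → Matrix (Fin 2) (Fin 2) ℂ),
      (∀ a, (N a).PosSemidef) ∧ (∑ a, N a = 1) ∧
      (∀ a, (σ a).PosSemidef ∧ (σ a).trace = 1) ∧
      ∀ ρ : Matrix (Fin 2) (Fin 2) ℂ, ρ.PosSemidef → ρ.trace = 1 →
        (t : ℂ) • ρ + ((1 - t : ℝ) : ℂ) •
            (ρ.trace • ((1/2 : ℂ) • (1 : Matrix (Fin 2) (Fin 2) ℂ))) =
          ∑ a, (ρ * N a).trace • σ a := by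
  refine ⟨6, fun a => (1/3 : ℂ) • pauliEigenprojector a, pauliPreparedState t,
    fun a => (pauliEigenprojector_posSemidef a).smul (by positivity), ?_,
    fun a => ⟨pauliPreparedState_posSemidef h0 ht a, trace_pauliPreparedState t a⟩,
    fun ρ _ _ => ?_⟩
  · rw [← Finset.smul_sum, sum_pauliEigenprojector, smul_smul]
    norm_num
  · rw [sum_trace_mul_smul_pauliPreparedState]
    push_cast
    module
end
end
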